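/- arXiv:1412.2326 — 2 statements merged into one kernel-verified Lean document; each statement's English description precedes it below -/
import Mathlib

section
/- If βqN < α < (2+√3)·βqN, then with t₁ = (1/τ)·ln((2+√3)βqN/α) we have t₁ > 0, x'''(t) < 0 on (0, t₁), and x'''(t) > 0 on (t₁, ∞); i.e., x' decreases concavely then convexly. -/
open Real Filter Set

/-! Since `g' = τ g`, we have `x = qN - (τ/β) / (g + 1)`, and differentiating three times gives
`x''' = (τ⁴/β) · g / (g + 1)⁴ · (g² - 4g + 1)`. The quadratic factor has roots `2 ± √3`, and `g`
increases from `g 0 = α/(βqN) ∈ (1, 2 + √3)`, passing `2 + √3` exactly at `t₁`. -/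

section ExponentialGrowth

variable {u : ℝ → ℝ} {τ t : ℝ}

lemma hasDerivAt_inv_add_one (hu : HasDerivAt u (τ * u t) t) (h : u t + 1 ≠ 0) :
    HasDerivAt (fun s => (u s + 1)⁻¹) (-τ * (u t / (u t + 1) ^ 2)) t := by
  refine ((hu.add_const 1).inv h).congr_deriv ?_
  field_simp

lemma hasDerivAt_div_add_one_sq (hu : HasDerivAt u (τ * u t) t) (h : u t + 1 ≠ 0) :
    HasDerivAt (fun s => u s / (u s + 1) ^ 2) (τ * (u t * (1 - u t) / (u t + 1) ^ 3)) t := by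
  refine (hu.div ((hu.add_const 1).pow 2) (pow_ne_zero 2 h)).congr_deriv ?_
  simp only [Pi.pow_apply]
  field_simp
  ring

lemma hasDerivAt_mul_one_sub_div_add_one_pow_three (hu : HasDerivAt u (τ * u t) t)
    (h : u t + 1 ≠ 0) :
    HasDerivAt (fun s => u s * (1 - u s) / (u s + 1) ^ 3)
      (τ * (u t / (u t + 1) ^ 4 * (u t ^ 2 - 4 * u t + 1))) t := by
  refine ((hu.mul (hu.const_sub 1)).div ((hu.add_const 1).pow 3)
    (pow_ne_zero 3 h)).congr_deriv ?_
  simp only [Pi.pow_apply, Pi.mul_apply]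
  field_simp
  ring

lemma deriv_deriv_deriv_const_sub_mul_inv_add_one (hu : ∀ t, HasDerivAt u (τ * u t) t)
    (h : ∀ t, u t + 1 ≠ 0) (K A : ℝ) :
    deriv (deriv (deriv fun t => K - A * (u t + 1)⁻¹)) =
      fun t => A * τ ^ 3 * (u t / (u t + 1) ^ 4) * (u t ^ 2 - 4 * u t + 1) := by
  have h₁ : deriv (fun t => K - A * (u t + 1)⁻¹) = fun t => A * τ * (u t / (u t + 1) ^ 2) :=
    funext fun t => by
      convert (((hasDerivAt_inv_add_one (hu t) (h t)).const_mul A).const_sub K).deriv using 1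
      ring
  have h₂ : deriv (fun t => A * τ * (u t / (u t + 1) ^ 2)) =
      fun t => A * τ ^ 2 * (u t * (1 - u t) / (u t + 1) ^ 3) :=
    funext fun t => by
      convert ((hasDerivAt_div_add_one_sq (hu t) (h t)).const_mul (A * τ)).deriv using 1
      ring
  rw [h₁, h₂]
  funext t
  convert ((hasDerivAt_mul_one_sub_div_add_one_pow_three (hu t) (h t)).const_mul
    (A * τ ^ 2)).deriv using 1
  ring

end ExponentialGrowth

lemma hasDerivAt_mul_exp_mul (c τ t : ℝ) :
    HasDerivAt (fun s => c * exp (τ * s)) (τ * (c * exp (τ * t))) t := by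
  refine ((hasDerivAt_const_mul τ).exp.const_mul c).congr_deriv ?_
  ring

lemma sq_sub_four_mul_add_one_eq (s : ℝ) :
    s ^ 2 - 4 * s + 1 = (s - (2 - √3)) * (s - (2 + √3)) := by
  ring_nf
  rw [sq_sqrt zero_le_three]
  ring

lemma sq_sub_four_mul_add_one_neg {s : ℝ} (h₁ : 2 - √3 < s) (h₂ : s < 2 + √3) :
    s ^ 2 - 4 * s + 1 < 0 := by
  rw [sq_sub_four_mul_add_one_eq]
  exact mul_neg_of_pos_of_neg (sub_pos.2 h₁) (sub_neg.2 h₂)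

lemma sq_sub_four_mul_add_one_pos {s : ℝ} (h : 2 + √3 < s) : 0 < s ^ 2 - 4 * s + 1 := by
  have h₁ : 2 - √3 < s := by linarith [sqrt_nonneg 3]
  rw [sq_sub_four_mul_add_one_eq]
  exact mul_pos (sub_pos.2 h₁) (sub_pos.2 h)

lemma strictMono_mul_exp_mul {c τ : ℝ} (hc : 0 < c) (hτ : 0 < τ) :
    StrictMono fun t => c * exp (τ * t) := fun _ _ h => by dsimp only; gcongr

lemma mul_exp_mul_one_div_mul_log_div {c τ a : ℝ} (hc : 0 < c) (hτ : τ ≠ 0) (ha : 0 < a) :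
    c * exp (τ * (1 / τ * log (a / c))) = a := by
  rw [← mul_assoc, mul_one_div_cancel hτ, one_mul, exp_log (div_pos ha hc), mul_div_cancel₀ _ hc.ne']

theorem stmt_10 (N α β q τ : ℝ) (hN : 0 < N) (hα : 0 < α) (hβ : 0 < β) (hq : 0 < q)
    (hτ : τ = α + β * q * N)
    (g x : ℝ → ℝ)
    (hg : ∀ t, g t = (α / (β * q * N)) * Real.exp (τ * t))
    (hx : ∀ t, x t = (q * N * g t - α / β) / (g t + 1))
    (hlo : β * q * N < α) (hhi : α < (2 + Real.sqrt 3) * (β * q * N))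
    (t₁ : ℝ) (ht₁ : t₁ = (1 / τ) * Real.log ((2 + Real.sqrt 3) * (β * q * N) / α)) :
    0 < t₁ ∧
    (∀ t : ℝ, t ∈ Ioo 0 t₁ → deriv (deriv (deriv x)) t < 0) ∧
    (∀ t : ℝ, t₁ < t → 0 < deriv (deriv (deriv x)) t) := by
  have hp : 0 < β * q * N := by positivity
  have hτ₀ : 0 < τ := by linarith
  have hg_eq : g = fun t => α / (β * q * N) * exp (τ * t) := funext hg
  have hg₀ : ∀ t, 0 < g t := fun t => by rw [hg]; positivity
  have hg_mono : StrictMono g := hg_eq ▸ strictMono_mul_exp_mul (by positivity) hτ₀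
  have hg_zero : g 0 = α / (β * q * N) := by simp [hg]
  have hg_t₁ : g t₁ = 2 + √3 := by
    have : (2 + √3) * (β * q * N) / α = (2 + √3) / (α / (β * q * N)) := by field_simp
    rw [hg, ht₁, this]
    exact mul_exp_mul_one_div_mul_log_div (by positivity) hτ₀.ne' (by positivity)
  have hx₃ : deriv (deriv (deriv x)) =
      fun t => τ / β * τ ^ 3 * (g t / (g t + 1) ^ 4) * (g t ^ 2 - 4 * g t + 1) := by
    have hxg : x = fun t => q * N - τ / β * (g t + 1)⁻¹ := funext fun t => by
      have := (add_pos (hg₀ t) one_pos).ne'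
      rw [hx, hτ]
      field_simp
      ring
    rw [hxg]
    exact deriv_deriv_deriv_const_sub_mul_inv_add_one (hg_eq ▸ hasDerivAt_mul_exp_mul _ τ)
      (fun t => (add_pos (hg₀ t) one_pos).ne') _ _
  have hcoef : ∀ t, 0 < τ / β * τ ^ 3 * (g t / (g t + 1) ^ 4) := fun t => by
    have := hg₀ t
    positivity
  refine ⟨hg_mono.lt_iff_lt.1 (by rw [hg_zero, hg_t₁]; exact (div_lt_iff₀ hp).2 hhi), ?_, ?_⟩
  · rintro t ⟨ht₀, ht⟩
    have h₁ : 2 - √3 < g t := by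
      have := hg_mono ht₀
      have := (one_lt_div hp).2 hlo
      linarith [(lt_sqrt zero_le_one).2 (by norm_num : (1 : ℝ) ^ 2 < 3)]
    rw [hx₃]
    exact mul_neg_of_pos_of_neg (hcoef t) (sq_sub_four_mul_add_one_neg h₁ (hg_t₁ ▸ hg_mono ht))
  · intro t ht
    rw [hx₃]
    exact mul_pos (hcoef t) (sq_sub_four_mul_add_one_pos (hg_t₁ ▸ hg_mono ht))
end

section
/- If α ≥ βqN, then x'(t) attains its global maximum over [0, ∞) at t = 0, with x'(0) = τ²·(α/(βqN))/(β·(α/(βqN)+1)²) = α·q·N. -/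
open Real Filter Set

/- The derivative is `x' = (τ²/β) · φ(g)` with `φ(u) = u / (u + 1)²`, because `g' = τ g` and
`qN + α/β = τ/β`. Here `φ` decreases on `[1, ∞)`, while `g` increases from `g 0 = α/(βqN) ≥ 1`,
so `x'` is largest at `t = 0`. -/

lemma antitoneOn_div_add_one_sq : AntitoneOn (fun u : ℝ => u / (u + 1) ^ 2) (Ici 1) := by
  intro u hu v hv huv
  simp only [mem_Ici] at hu hv
  rw [div_le_div_iff₀ (by positivity) (by positivity)]
  -- `u (v + 1)² - v (u + 1)² = (v - u)(uv - 1)`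
  nlinarith [mul_nonneg (sub_nonneg.2 huv) (sub_nonneg.2 (one_le_mul_of_one_le_of_one_le hu hv))]

lemma HasDerivAt.mul_sub_div_add_one {f : ℝ → ℝ} {f' t : ℝ} (p r : ℝ) (hf : HasDerivAt f f' t)
    (hft : f t + 1 ≠ 0) :
    HasDerivAt (fun s => (p * f s - r) / (f s + 1)) ((p + r) * f' / (f t + 1) ^ 2) t := by
  refine (((hf.const_mul p).sub_const r).div (hf.add_const 1) hft).congr_deriv ?_
  ring

lemma hasDerivAt_const_mul_exp_mul (a τ t : ℝ) :
    HasDerivAt (fun s => a * exp (τ * s)) (τ * (a * exp (τ * t))) t := by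
  refine ((((hasDerivAt_id t).const_mul τ).exp).const_mul a).congr_deriv ?_
  simp only [id, mul_one]
  ring

theorem stmt_13_general (N α β q τ : ℝ) (hN : 0 < N) (hβ : 0 < β) (hq : 0 < q)
    (hτ : τ = α + β * q * N)
    (g x : ℝ → ℝ)
    (hg : ∀ t, g t = (α / (β * q * N)) * Real.exp (τ * t))
    (hx : ∀ t, x t = (q * N * g t - α / β) / (g t + 1))
    (hcase : β * q * N ≤ α) :
    IsMaxOn (deriv x) (Ici (0 : ℝ)) 0 ∧
    deriv x 0 = τ ^ 2 * (α / (β * q * N)) / (β * (α / (β * q * N) + 1) ^ 2) ∧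
    deriv x 0 = α * q * N := by
  have hbqN : 0 < β * q * N := by positivity
  have hτ_pos : 0 < τ := by linarith
  have hg0 : g 0 = α / (β * q * N) := by simp [hg]
  have hg0_ge : 1 ≤ g 0 := by rwa [hg0, one_le_div hbqN]
  have hg_mono : ∀ t, 0 ≤ t → g 0 ≤ g t := fun t ht => by
    rw [hg0, hg]
    exact le_mul_of_one_le_right (by linarith) (one_le_exp (mul_nonneg hτ_pos.le ht))
  have hderiv : ∀ t, 0 ≤ t → deriv x t = τ ^ 2 / β * (g t / (g t + 1) ^ 2) := fun t ht => by
    have hg' : HasDerivAt g (τ * g t) t := by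
      rw [hg t, funext hg]; exact hasDerivAt_const_mul_exp_mul _ _ t
    have hgt : g t + 1 ≠ 0 := by linarith [hg_mono t ht]
    rw [funext hx, (hg'.mul_sub_div_add_one (q * N) (α / β) hgt).deriv, hτ]
    field_simp
    ring
  refine ⟨fun t ht => ?_, ?_, ?_⟩
  · simp only [mem_ofPred_eq, hderiv t ht, hderiv 0 le_rfl]
    exact mul_le_mul_of_nonneg_left
      (antitoneOn_div_add_one_sq hg0_ge (hg0_ge.trans (hg_mono t ht)) (hg_mono t ht))
      (by positivity)
  · rw [hderiv 0 le_rfl, hg0, div_mul_div_comm]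
  · have ha1 : α / (β * q * N) + 1 = τ / (β * q * N) := by rw [hτ]; field_simp
    rw [hderiv 0 le_rfl, hg0, ha1]
    field_simp

theorem stmt_13 (N α β q τ : ℝ) (hN : 0 < N) (hα : 0 < α) (hβ : 0 < β) (hq : 0 < q)
    (hτ : τ = α + β * q * N)
    (g x : ℝ → ℝ)
    (hg : ∀ t, g t = (α / (β * q * N)) * Real.exp (τ * t))
    (hx : ∀ t, x t = (q * N * g t - α / β) / (g t + 1))
    (hcase : β * q * N ≤ α) :
    IsMaxOn (deriv x) (Ici (0 : ℝ)) 0 ∧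
    deriv x 0 = τ ^ 2 * (α / (β * q * N)) / (β * (α / (β * q * N) + 1) ^ 2) ∧
    deriv x 0 = α * q * N :=
  stmt_13_general N α β q τ hN hβ hq hτ g x hg hx hcase
end
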